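/- Let q ≥ 2 be an integer and let F be a finite simple forest of cacti with exactly k connected components. For each integer i let γ_i(F) denote the number of cycles of length i in F, and let γ_{>q}(F) denote the number of cycles of F of length strictly greater than q. Then γ_{>q}(F) ≤ (1/q)·(|F| − k − Σ_{i=3}^{q} (i−1)·γ_i(F)), where |F| is the number of vertices of F. -/

import Mathlib

open SimpleGraph

variable {V : Type*}

/-- A diamond in a simple graph: two distinct vertices joined by three pairwise
internally vertex-disjoint paths. -/
structure SimpleGraph.Diamond (G : SimpleGraph V) where
  u : V
  v : V
  ne : u ≠ v
  p₁ : G.Walk u v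
  p₂ : G.Walk u v
  p₃ : G.Walk u v
  h₁ : p₁.IsPath
  h₂ : p₂.IsPath
  h₃ : p₃.IsPath
  ne₁₂ : p₁ ≠ p₂
  ne₁₃ : p₁ ≠ p₃
  ne₂₃ : p₂ ≠ p₃
  disj₁₂ : ∀ x, x ∈ p₁.support → x ∈ p₂.support → x = u ∨ x = v
  disj₁₃ : ∀ x, x ∈ p₁.support → x ∈ p₃.support → x = u ∨ x = v
  disj₂₃ : ∀ x, x ∈ p₂.support → x ∈ p₃.support → x = u ∨ x = v

/-- The number of edges of a diamond. -/
def SimpleGraph.Diamond.size {G : SimpleGraph V} (D : G.Diamond) : ℕ :=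
  D.p₁.length + D.p₂.length + D.p₃.length

/-- The vertex set of a diamond. -/
def SimpleGraph.Diamond.vertexSet {G : SimpleGraph V} (D : G.Diamond) : Set V :=
  {x | x ∈ D.p₁.support ∨ x ∈ D.p₂.support ∨ x ∈ D.p₃.support}

/-- The edge set of a diamond. -/
def SimpleGraph.Diamond.edgeSet {G : SimpleGraph V} (D : G.Diamond) : Set (Sym2 V) :=
  {e | e ∈ D.p₁.edges ∨ e ∈ D.p₂.edges ∨ e ∈ D.p₃.edges}

/-- A set of vertices hitting every diamond of `G`. -/
def SimpleGraph.IsDiamondHittingSet (G : SimpleGraph V) (X : Set V) : Prop :=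
  ∀ D : G.Diamond, ∃ x ∈ X, x ∈ D.vertexSet

/-- The cycles of `G`, identified with their edge sets. -/
def SimpleGraph.cycleSet (G : SimpleGraph V) : Set (Set (Sym2 V)) :=
  {s | ∃ (v : V) (w : G.Walk v v), w.IsCycle ∧ s = {e | e ∈ w.edges}}

/-- The cycles of length `i` of `G`, identified with their edge sets. -/
def SimpleGraph.cycleSetLen (G : SimpleGraph V) (i : ℕ) : Set (Set (Sym2 V)) :=
  {s | ∃ (v : V) (w : G.Walk v v), w.IsCycle ∧ w.length = i ∧ s = {e | e ∈ w.edges}}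

/-- The cycles of length `i` of `G` passing through `v`, identified with their edge sets. -/
def SimpleGraph.cycleSetLenThrough (G : SimpleGraph V) (i : ℕ) (v : V) : Set (Set (Sym2 V)) :=
  {s | ∃ w : G.Walk v v, w.IsCycle ∧ w.length = i ∧ s = {e | e ∈ w.edges}}

/-- The set of vertices at distance exactly `d` from `u`. -/
def SimpleGraph.sphere (G : SimpleGraph V) (u : V) (d : ℕ) : Set V :=
  {w | G.Reachable u w ∧ G.dist u w = d}

/-- The cycles of `G` of length strictly greater than `q`, identified with their edge sets. -/
def SimpleGraph.cycleSetGT (G : SimpleGraph V) (q : ℕ) : Set (Set (Sym2 V)) :=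
  {s | ∃ (v : V) (w : G.Walk v v), w.IsCycle ∧ q < w.length ∧ s = {e | e ∈ w.edges}}

/-!
In a diamond-free graph a path joining two vertices of a cycle `C` runs along `C`: otherwise its
first excursion away from `C`, together with the two arcs of `C` between the ends of that
excursion, is a diamond. Hence distinct cycles are edge-disjoint, and deleting the edges of a
cycle of length `ℓ` leaves its `ℓ` vertices in distinct components, so the number of components
grows by at least `ℓ - 1` while all other cycles survive. Induction gives
`∑_C (|C| - 1) + k ≤ |F|`; splitting the sum by cycle length, a cycle longer than `q`
contributes at least `q`.
-/

theorem Nat.card_add_ncard_le_of_surjective {α β : Type*} [Finite α] {f : α → β}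
    (hf : f.Surjective) {b : β} {s : Set α} (hs : ∀ a ∈ s, f a = b) :
    Nat.card β + s.ncard ≤ Nat.card α + 1 := by
  have : Finite β := Finite.of_surjective f hf
  have hcompl := Set.ncard_image_le (f := f) (s := f ⁻¹' {b}ᶜ) (Set.toFinite _)
  rw [Set.image_preimage_eq _ hf] at hcompl
  have hfiber : s.ncard ≤ (f ⁻¹' {b}).ncard := Set.ncard_le_ncard hs (Set.toFinite _)
  have hα := Set.ncard_add_ncard_compl (f ⁻¹' {b})
  have hβ := Set.ncard_add_ncard_compl ({b} : Set β)
  rw [← Set.preimage_compl] at hα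
  rw [Set.ncard_singleton] at hβ
  omega

open Finset in
theorem Finset.sum_Icc_mul_card_eq_add_mul_card_lt_le_sum {α : Type*} (S : Finset α)
    (n : α → ℕ) (m q : ℕ) :
    ∑ i ∈ Icc m q, (i - 1) * #{s ∈ S | n s = i} + q * #{s ∈ S | q < n s} ≤
      ∑ s ∈ S, (n s - 1) := by
  simp only [card_filter, mul_sum]
  rw [sum_comm, ← sum_add_distrib]
  refine sum_le_sum fun s _ => ?_
  simp only [mul_ite, mul_one, mul_zero, sum_ite_eq, mem_Icc]
  split_ifs <;> omega

namespace SimpleGraph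

variable {G G' : SimpleGraph V}

def Diamond.mapLe (h : G ≤ G') (D : G.Diamond) : G'.Diamond where
  u := D.u
  v := D.v
  ne := D.ne
  p₁ := D.p₁.mapLe h
  p₂ := D.p₂.mapLe h
  p₃ := D.p₃.mapLe h
  h₁ := D.h₁.mapLe h
  h₂ := D.h₂.mapLe h
  h₃ := D.h₃.mapLe h
  ne₁₂ := (Walk.map_injective_of_injective Function.injective_id _ _).ne D.ne₁₂
  ne₁₃ := (Walk.map_injective_of_injective Function.injective_id _ _).ne D.ne₁₃
  ne₂₃ := (Walk.map_injective_of_injective Function.injective_id _ _).ne D.ne₂₃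
  disj₁₂ x h₁ h₂ := D.disj₁₂ x (by simpa using h₁) (by simpa using h₂)
  disj₁₃ x h₁ h₃ := D.disj₁₃ x (by simpa using h₁) (by simpa using h₃)
  disj₂₃ x h₂ h₃ := D.disj₂₃ x (by simpa using h₂) (by simpa using h₃)

theorem isEmpty_diamond_of_le (h : G ≤ G') (hG' : IsEmpty G'.Diamond) : IsEmpty G.Diamond :=
  ⟨fun D => hG'.false (D.mapLe h)⟩

namespace Walk

variable {u v x y : V}

theorem IsTrail.ncard_setOf_mem_edges {w : G.Walk u v} (hw : w.IsTrail) :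
    {e | e ∈ w.edges}.ncard = w.length := by
  classical
  rw [← List.coe_toFinset, Set.ncard_coe_finset, List.toFinset_card_of_nodup hw.edges_nodup,
    length_edges]

theorem IsCycle.ncard_setOf_mem_support {w : G.Walk v v} (hw : w.IsCycle) :
    {z | z ∈ w.support}.ncard = w.length := by
  classical
  have htail : {z | z ∈ w.support} = {z | z ∈ w.support.tail} := by
    refine Set.ext fun z => ⟨fun hz => ?_, List.mem_of_mem_tail⟩
    rw [Set.mem_ofPred_eq, ← w.cons_tail_support, List.mem_cons] at hz
    exact hz.elim (fun h => h ▸ w.end_mem_tail_support hw.not_nil) id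
  rw [htail, ← List.coe_toFinset, Set.ncard_coe_finset,
    List.toFinset_card_of_nodup hw.support_nodup, List.length_tail, length_support,
    Nat.add_sub_cancel]

section DecidableEq

variable [DecidableEq V]

theorem IsCycle.isPath_dropUntil {c : G.Walk v v} (hc : c.IsCycle) (h : u ∈ c.support)
    (huv : u ≠ v) : (c.dropUntil u h).IsPath := by
  rw [← c.take_spec h] at hc
  exact hc.isPath_of_append_right (not_nil_of_ne huv.symm)

theorem IsCycle.eq_or_eq_of_mem_support_takeUntil_of_mem_support_dropUntil {c : G.Walk v v}
    (hc : c.IsCycle) (h : u ∈ c.support) {z : V} (hz₁ : z ∈ (c.takeUntil u h).support)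
    (hz₂ : z ∈ (c.dropUntil u h).support) : z = v ∨ z = u := by
  have hnodup := hc.support_nodup
  rw [← c.take_spec h, tail_support_append] at hnodup
  rw [← cons_tail_support, List.mem_cons] at hz₁ hz₂
  rcases hz₁ with rfl | hz₁
  · exact .inl rfl
  rcases hz₂ with rfl | hz₂
  · exact .inr rfl
  exact absurd hz₂ (List.disjoint_of_nodup_append hnodup hz₁)

theorem IsCycle.edges_subset_of_isPath_of_forall_mem (hG : IsEmpty G.Diamond) {c : G.Walk x x}
    (hc : c.IsCycle) (hy : y ∈ c.support) (hxy : x ≠ y) {Q : G.Walk x y} (hQ : Q.IsPath)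
    (hQc : ∀ z ∈ Q.support, z ∈ c.support → z = x ∨ z = y) : Q.edges ⊆ c.edges := by
  intro e heQ
  by_contra hec
  set p := c.takeUntil y hy
  set d := c.dropUntil y hy
  have hpc : p.edges ⊆ c.edges := c.edges_takeUntil_subset_edges hy
  have hdc : d.edges ⊆ c.edges := c.edges_dropUntil_subset_edges hy
  obtain ⟨e₀, he₀⟩ : ∃ e₀, e₀ ∈ p.edges :=
    List.exists_mem_of_ne_nil _ (by simpa [edges_eq_nil] using not_nil_of_ne hxy)
  refine hG.false ⟨x, y, hxy, p, d.reverse, Q, hc.isPath_takeUntil hy,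
    (hc.isPath_dropUntil hy hxy.symm).reverse, hQ, ?_, ?_, ?_, ?_, ?_, ?_⟩
  · intro hpd
    exact hc.isTrail.disjoint_edges_takeUntil_dropUntil hy he₀ (by simpa [hpd] using he₀)
  · rintro rfl
    exact hec (hpc heQ)
  · intro hdQ
    exact hec (hdc (by simpa [← hdQ] using heQ))
  · intro z hz₁ hz₂
    exact hc.eq_or_eq_of_mem_support_takeUntil_of_mem_support_dropUntil hy hz₁
      (by simpa using hz₂)
  · intro z hz₁ hz₃
    exact hQc z hz₃ (c.support_takeUntil_subset_support hy hz₁)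
  · intro z hz₂ hz₃
    exact hQc z hz₃ (c.support_dropUntil_subset_support hy (by simpa using hz₂))

end DecidableEq

theorem IsCycle.edges_subset_of_isPath (hG : IsEmpty G.Diamond) {w : G.Walk v v}
    (hw : w.IsCycle) {P : G.Walk x y} (hP : P.IsPath) (hx : x ∈ w.support)
    (hy : y ∈ w.support) : P.edges ⊆ w.edges := by
  classical
  induction P with
  | nil => simp
  | @cons x a y hxa P ih =>
    rw [cons_isPath_iff] at hP
    obtain ⟨z, hzw, hzP, hfirst⟩ :=
      P.exists_mem_support_forall_mem_support_imp_eq w.support.toFinset ⟨y, by simp [hy]⟩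
    rw [List.mem_toFinset] at hzw
    -- `x → a ⇝ z`, where `z` is the first vertex of `P` on `w`, meets `w` only at its ends
    have hear : (cons hxa (P.takeUntil z hzP)).edges ⊆ (w.rotate x hx).edges := by
      refine (hw.rotate hx).edges_subset_of_isPath_of_forall_mem hG
        ((w.mem_support_rotate_iff x hx).2 hzw) (fun h => hP.2 (h ▸ hzP))
        ((hP.1.takeUntil hzP).cons fun h => hP.2 (P.support_takeUntil_subset_support hzP h)) ?_
      intro t ht htw
      rw [support_cons, List.mem_cons] at ht
      rw [mem_support_rotate_iff] at htw
      exact ht.imp_right fun ht => hfirst t (List.mem_toFinset.2 htw) ht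
    have hxa_w : s(x, a) ∈ w.edges :=
      (w.rotate_edges x hx).perm.subset (hear List.mem_cons_self)
    rw [edges_cons, List.cons_subset]
    exact ⟨hxa_w, ih hP.1 (w.snd_mem_support_of_mem_edges hxa_w) hy⟩

theorem IsCycle.edges_subset_of_mem_support (hG : IsEmpty G.Diamond) {w₁ : G.Walk u u}
    {w₂ : G.Walk v v} (hw₁ : w₁.IsCycle) (hw₂ : w₂.IsCycle) (hxy : x ≠ y)
    (hx₁ : x ∈ w₁.support) (hy₁ : y ∈ w₁.support) (hx₂ : x ∈ w₂.support)
    (hy₂ : y ∈ w₂.support) : w₂.edges ⊆ w₁.edges := by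
  classical
  set c := w₂.rotate x hx₂
  have hc : c.IsCycle := hw₂.rotate hx₂
  have hyc : y ∈ c.support := (w₂.mem_support_rotate_iff x hx₂).2 hy₂
  intro e he
  have hec : e ∈ c.edges := (w₂.rotate_edges x hx₂).perm.symm.subset he
  rw [← c.take_spec hyc, edges_append, List.mem_append] at hec
  rcases hec with hec | hec
  · exact hw₁.edges_subset_of_isPath hG (hc.isPath_takeUntil hyc) hx₁ hy₁ hec
  · exact hw₁.edges_subset_of_isPath hG (hc.isPath_dropUntil hyc hxy.symm) hy₁ hx₁ hec

theorem IsCycle.edges_subset_of_mem_edges (hG : IsEmpty G.Diamond) {w₁ : G.Walk u u}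
    {w₂ : G.Walk v v} (hw₁ : w₁.IsCycle) (hw₂ : w₂.IsCycle) {e : Sym2 V}
    (he₁ : e ∈ w₁.edges) (he₂ : e ∈ w₂.edges) : w₂.edges ⊆ w₁.edges := by
  induction e using Sym2.ind with
  | _ a b =>
    exact hw₁.edges_subset_of_mem_support hG hw₂ (w₁.adj_of_mem_edges he₁).ne
      (w₁.fst_mem_support_of_mem_edges he₁) (w₁.snd_mem_support_of_mem_edges he₁)
      (w₂.fst_mem_support_of_mem_edges he₂) (w₂.snd_mem_support_of_mem_edges he₂)

end Walk

theorem disjoint_of_mem_cycleSet (hG : IsEmpty G.Diamond) {s t : Set (Sym2 V)}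
    (hs : s ∈ G.cycleSet) (ht : t ∈ G.cycleSet) (hst : s ≠ t) : Disjoint s t := by
  obtain ⟨u, w₁, hw₁, rfl⟩ := hs
  obtain ⟨v, w₂, hw₂, rfl⟩ := ht
  refine Set.disjoint_left.2 fun e he₁ he₂ => hst ?_
  exact Set.ext fun f => ⟨fun hf => hw₂.edges_subset_of_mem_edges hG hw₁ he₂ he₁ hf,
    fun hf => hw₁.edges_subset_of_mem_edges hG hw₂ he₁ he₂ hf⟩

theorem cycleSet_diff_subset_cycleSet_deleteEdges (hG : IsEmpty G.Diamond) {s : Set (Sym2 V)}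
    (hs : s ∈ G.cycleSet) : G.cycleSet \ {s} ⊆ (G.deleteEdges s).cycleSet := by
  rintro _ ⟨ht, hts⟩
  obtain ⟨u, w, hw, rfl⟩ := ht
  have hdisj := disjoint_of_mem_cycleSet hG ⟨u, w, hw, rfl⟩ hs hts
  have hws : ∀ e ∈ w.edges, e ∉ s := fun e he => Set.disjoint_left.1 hdisj he
  exact ⟨u, w.toDeleteEdges s hws, hw.toDeleteEdges G s hws, by simp [Walk.toDeleteEdges]⟩

theorem not_reachable_deleteEdges_of_mem_support (hG : IsEmpty G.Diamond) {v x y : V}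
    {w : G.Walk v v} (hw : w.IsCycle) (hx : x ∈ w.support) (hy : y ∈ w.support)
    (hxy : x ≠ y) : ¬ (G.deleteEdges {e | e ∈ w.edges}).Reachable x y := by
  intro hr
  obtain ⟨P, hP⟩ := hr.exists_isPath
  have hPw : P.edges ⊆ w.edges := by
    simpa using hw.edges_subset_of_isPath hG (hP.mapLe (deleteEdges_le _)) hx hy
  cases P with
  | nil => exact hxy rfl
  | cons hadj P => exact (deleteEdges_adj.1 hadj).2 (hPw List.mem_cons_self)

theorem card_connectedComponent_add_length_le [Finite V] (hG : IsEmpty G.Diamond) {v : V}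
    {w : G.Walk v v} (hw : w.IsCycle) :
    Nat.card G.ConnectedComponent + w.length ≤
      Nat.card (G.deleteEdges {e | e ∈ w.edges}).ConnectedComponent + 1 := by
  classical
  set G' := G.deleteEdges {e | e ∈ w.edges}
  have hinj : Set.InjOn G'.connectedComponentMk {z | z ∈ w.support} := fun x hx y hy hxy =>
    by_contra fun hne => not_reachable_deleteEdges_of_mem_support hG hw hx hy hne
      (ConnectedComponent.exact hxy)
  rw [← hw.ncard_setOf_mem_support, ← hinj.ncard_image]
  refine Nat.card_add_ncard_le_of_surjective
    (ConnectedComponent.surjective_map_ofLE (deleteEdges_le _)) (b := G.connectedComponentMk v) ?_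
  rintro _ ⟨z, hz, rfl⟩
  exact ConnectedComponent.sound ⟨(w.takeUntil z hz).reverse⟩

theorem sum_ncard_sub_one_add_card_connectedComponent_le [Fintype V] (hG : IsEmpty G.Diamond) :
    ∑ s ∈ G.cycleSet.toFinite.toFinset, (s.ncard - 1) + Nat.card G.ConnectedComponent ≤
      Fintype.card V := by
  induction G using WellFoundedLT.induction with
  | ind G ih =>
    rcases G.cycleSet.eq_empty_or_nonempty with hempty | ⟨s, hs⟩
    · simp only [hempty, Set.Finite.toFinset_empty, Finset.sum_empty, zero_add]
      exact Nat.card_eq_fintype_card (α := V) ▸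
        Nat.card_le_card_of_surjective _ Quot.mk_surjective
    obtain ⟨v, w, hw, rfl⟩ := id hs
    have hcc := card_connectedComponent_add_length_le hG hw
    set G' := G.deleteEdges {e | e ∈ w.edges}
    have hG'G : G' < G := by
      refine lt_of_le_of_ne (deleteEdges_le _) fun h => ?_
      obtain ⟨e, he⟩ :=
        List.exists_mem_of_ne_nil w.edges (by simpa [Walk.edges_eq_nil] using hw.not_nil)
      exact Set.disjoint_left.1 (deleteEdges_eq_self.1 h) (w.edges_subset_edgeSet he) he
    have hG' := ih G' hG'G (isEmpty_diamond_of_le (deleteEdges_le _) hG)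
    have hsum : ∑ s ∈ G.cycleSet.toFinite.toFinset, (s.ncard - 1) ≤
        (w.length - 1) + ∑ s ∈ G'.cycleSet.toFinite.toFinset, (s.ncard - 1) := by
      have hmem : {e | e ∈ w.edges} ∈ G.cycleSet.toFinite.toFinset :=
        (Set.Finite.mem_toFinset _).2 hs
      rw [← Finset.add_sum_erase _ _ hmem, hw.isTrail.ncard_setOf_mem_edges]
      refine Nat.add_le_add_left (Finset.sum_le_sum_of_subset fun t ht => ?_) _
      rw [Finset.mem_erase, Set.Finite.mem_toFinset] at ht
      exact (Set.Finite.mem_toFinset _).2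
        (cycleSet_diff_subset_cycleSet_deleteEdges hG hs ⟨ht.2, ht.1⟩)
    have := hw.three_le_length
    omega

theorem cycleSetLen_eq_sep (i : ℕ) : G.cycleSetLen i = {s ∈ G.cycleSet | s.ncard = i} := by
  ext s
  constructor
  · rintro ⟨v, w, hw, rfl, rfl⟩
    exact ⟨⟨v, w, hw, rfl⟩, hw.isTrail.ncard_setOf_mem_edges⟩
  · rintro ⟨⟨v, w, hw, rfl⟩, rfl⟩
    exact ⟨v, w, hw, hw.isTrail.ncard_setOf_mem_edges.symm, rfl⟩

theorem cycleSetGT_eq_sep (q : ℕ) : G.cycleSetGT q = {s ∈ G.cycleSet | q < s.ncard} := by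
  ext s
  constructor
  · rintro ⟨v, w, hw, hq, rfl⟩
    exact ⟨⟨v, w, hw, rfl⟩, hw.isTrail.ncard_setOf_mem_edges.symm ▸ hq⟩
  · rintro ⟨⟨v, w, hw, rfl⟩, hq⟩
    exact ⟨v, w, hw, hw.isTrail.ncard_setOf_mem_edges ▸ hq, rfl⟩

end SimpleGraph

open Finset in
theorem forest_of_cacti_long_cycles_bound_general (V : Type*) [Fintype V]
    (G : SimpleGraph V) (q : ℕ) (hq : 2 ≤ q)
    (hdiamondfree : IsEmpty G.Diamond)
    (k : ℕ) (hk : Nat.card G.ConnectedComponent = k) :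
    ((G.cycleSetGT q).ncard : ℝ) ≤
      (1 / q) * ((Fintype.card V : ℝ) - k -
        ∑ i ∈ Finset.Icc 3 q, ((i : ℝ) - 1) * (G.cycleSetLen i).ncard) := by
  have hsep (p : Set (Sym2 V) → Prop) [DecidablePred p] :
      {s ∈ G.cycleSet | p s}.ncard = #{s ∈ G.cycleSet.toFinite.toFinset | p s} := by
    rw [← Set.ncard_coe_finset, coe_filter]
    simp only [Set.Finite.mem_toFinset]
  have hcount :=
    G.cycleSet.toFinite.toFinset.sum_Icc_mul_card_eq_add_mul_card_lt_le_sum Set.ncard 3 q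
  simp only [← hsep, ← cycleSetLen_eq_sep, ← cycleSetGT_eq_sep] at hcount
  have hcore := sum_ncard_sub_one_add_card_connectedComponent_le hdiamondfree
  have hnat : q * (G.cycleSetGT q).ncard + ∑ i ∈ Icc 3 q, (i - 1) * (G.cycleSetLen i).ncard +
      k ≤ Fintype.card V := by
    omega
  have hcast : ((∑ i ∈ Icc 3 q, (i - 1) * (G.cycleSetLen i).ncard : ℕ) : ℝ) =
      ∑ i ∈ Icc 3 q, ((i : ℝ) - 1) * (G.cycleSetLen i).ncard := by
    push_cast
    refine sum_congr rfl fun i hi => ?_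
    rw [Nat.cast_sub (by linarith [(mem_Icc.1 hi).1]), Nat.cast_one]
  have hreal := (Nat.cast_le (α := ℝ)).2 hnat
  rw [Nat.cast_add, Nat.cast_add, Nat.cast_mul, hcast] at hreal
  rw [one_div, inv_mul_eq_div, le_div_iff₀ (Nat.cast_pos.2 (by omega))]
  linarith

/-- In a finite simple forest of cacti with `k` components, the number of cycles of length
exceeding `q` satisfies `γ_{>q}(F) ≤ (1/q)·(|F| − k − Σ_{i=3}^{q} (i−1)·γ_i(F))`. -/
theorem forest_of_cacti_long_cycles_bound (V : Type*) [Fintype V] [DecidableEq V]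
    (G : SimpleGraph V) [DecidableRel G.Adj] (q : ℕ) (hq : 2 ≤ q)
    (hdiamondfree : IsEmpty G.Diamond)
    (k : ℕ) (hk : Nat.card G.ConnectedComponent = k) :
    ((G.cycleSetGT q).ncard : ℝ) ≤
      (1 / q) * ((Fintype.card V : ℝ) - k -
        ∑ i ∈ Finset.Icc 3 q, ((i : ℝ) - 1) * (G.cycleSetLen i).ncard) :=
  forest_of_cacti_long_cycles_bound_general V G q hq hdiamondfree k hk
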